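/- Let A be a finite alphabet, let F ⊆ A* be a recurrent set, and let X be a rational F-maximal bifix code. Let u ∈ F. Then u has rank d_F(X) in the minimal automaton of X* if and only if η_{X*}(u) ∈ J_F(X). Moreover, if δ_X(u) = d_F(X), then u has rank d_F(X) in the minimal automaton of X*. -/

import Mathlib

/-! Common definitions: words over a finite alphabet `A` are terms of `List A`,
concatenation being the monoid operation of the free monoid `A*`. -/

namespace PaperDefs

variable {A : Type*}

/-- `w` belongs to the Kleene star `X*` of `X`: it is a (possibly empty)
concatenation of elements of `X`. -/
def InStar (X : Set (List A)) (w : List A) : Prop :=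
  ∃ l : List (List A), (∀ u ∈ l, u ∈ X) ∧ l.flatten = w

/-- The language `X*`. -/
def star (X : Set (List A)) : Set (List A) := {w | InStar X w}

/-- A prefix code: a nonempty set of nonempty words, none of which is a proper
prefix of another. -/
def IsPrefixCode (X : Set (List A)) : Prop :=
  X.Nonempty ∧ (∀ w ∈ X, w ≠ []) ∧ ∀ u ∈ X, ∀ v ∈ X, u <+: v → u = v

/-- A suffix code. -/
def IsSuffixCode (X : Set (List A)) : Prop :=
  X.Nonempty ∧ (∀ w ∈ X, w ≠ []) ∧ ∀ u ∈ X, ∀ v ∈ X, u <:+ v → u = v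

/-- A bifix code. -/
def IsBifixCode (X : Set (List A)) : Prop := IsPrefixCode X ∧ IsSuffixCode X

/-- A factorial set contains all factors of its elements. -/
def Factorial (F : Set (List A)) : Prop := ∀ w ∈ F, ∀ u, u <:+: w → u ∈ F

/-- A recurrent set. -/
def Recurrent (F : Set (List A)) : Prop :=
  Factorial F ∧ F.Nonempty ∧ F ≠ {[]} ∧ ∀ u ∈ F, ∀ v ∈ F, ∃ w, u ++ w ++ v ∈ F

/-- A uniformly recurrent set. -/
def UniformlyRecurrent (F : Set (List A)) : Prop :=
  Recurrent F ∧ ∀ u ∈ F, ∃ n : ℕ, ∀ w ∈ F, n ≤ w.length → u <:+: w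

/-- A parse of `w` with respect to `X` : a triple `(v, x, u)` with `w = v x u`,
`v` has no suffix in `X`, `x ∈ X*`, and `u` has no prefix in `X`. -/
def IsParse (X : Set (List A)) (w : List A) (p : List A × List A × List A) : Prop :=
  p.1 ++ p.2.1 ++ p.2.2 = w ∧ (¬ ∃ s ∈ X, s <:+ p.1) ∧ InStar X p.2.1 ∧
    ¬ ∃ s ∈ X, s <+: p.2.2

/-- `δ_X(w)`, the number of parses of `w` with respect to `X`. -/
noncomputable def delta (X : Set (List A)) (w : List A) : ℕ :=
  {p | IsParse X w p}.ncard

/-- The `F`-degree `d_F(X)` of `X`, as an extended natural number. -/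
noncomputable def Fdeg (X F : Set (List A)) : ℕ∞ :=
  ⨆ w ∈ F, (delta X w : ℕ∞)

/-- The degree `d(X)` of `X`. -/
noncomputable def deg (X : Set (List A)) : ℕ∞ := Fdeg X Set.univ

/-- An `F`-maximal bifix code. -/
def IsFMaximalBifixCode (F X : Set (List A)) : Prop :=
  IsBifixCode X ∧ X ⊆ F ∧ ∀ Y : Set (List A), IsBifixCode Y → Y ⊆ F → X ⊆ Y → Y = X

/-- An `F`-maximal prefix code. -/
def IsFMaximalPrefixCode (F X : Set (List A)) : Prop :=
  IsPrefixCode X ∧ X ⊆ F ∧ ∀ Y : Set (List A), IsPrefixCode Y → Y ⊆ F → X ⊆ Y → Y = X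

/-- `X` is `F`-thin: some word of `F` is not a factor of any element of `X`. -/
def FThin (F X : Set (List A)) : Prop := ∃ w ∈ F, ∀ x ∈ X, ¬ w <:+: x

/-- A rational (regular) language. -/
def IsRational (L : Set (List A)) : Prop :=
  ∃ (σ : Type) (_ : Fintype σ) (M : DFA A σ), ∀ w : List A, w ∈ M.accepts ↔ w ∈ L

/-- The syntactic congruence of the language `L`. -/
def SynEquiv (L : Set (List A)) (u v : List A) : Prop :=
  ∀ x y : List A, x ++ u ++ y ∈ L ↔ x ++ v ++ y ∈ L

/-- `η : A* → M` is (a realization of) the syntactic homomorphism onto the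
syntactic monoid of `L`. -/
structure IsSyntacticHom (L : Set (List A)) {M : Type*} [Monoid M] (η : List A → M) : Prop where
  map_nil : η [] = 1
  map_append : ∀ u v : List A, η (u ++ v) = η u * η v
  surj : Function.Surjective η
  syn : ∀ u v : List A, η u = η v ↔ SynEquiv L u v

section Green

variable {M : Type*} [Monoid M]

/-- The `J`-order: `MuM ⊆ MvM`. -/
def JLe (u v : M) : Prop := ∃ x y, u = x * v * y

/-- Green's relation `J`. -/
def JEquiv (u v : M) : Prop := JLe u v ∧ JLe v u

/-- Green's relation `R`. -/
def REquiv (u v : M) : Prop := (∃ x, v = u * x) ∧ (∃ x, u = v * x)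

/-- Green's relation `L`. -/
def LEquiv (u v : M) : Prop := (∃ x, v = x * u) ∧ (∃ x, u = x * v)

/-- Green's relation `H`. -/
def HEquiv (u v : M) : Prop := REquiv u v ∧ LEquiv u v

/-- Green's relation `D`. -/
def DEquiv (u v : M) : Prop := ∃ s, REquiv u s ∧ LEquiv s v

/-- The `H`-class of an element. -/
def HClass (e : M) : Set M := {m | HEquiv m e}

/-- Membership in the minimum ideal (minimum `J`-class) of `M`. -/
def InMinIdeal (m : M) : Prop := ∀ n : M, JLe m n

/-- `S` is a subgroup of the monoid `M`: a subsemigroup which is a group. -/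
def IsSubgroupIn (S : Set M) : Prop :=
  S.Nonempty ∧ (∀ x ∈ S, ∀ y ∈ S, x * y ∈ S) ∧
    ∃ e ∈ S, (∀ x ∈ S, e * x = x ∧ x * e = x) ∧ ∀ x ∈ S, ∃ y ∈ S, x * y = e ∧ y * x = e

/-- The subsets `S ⊆ M` and `T ⊆ N` (each closed under multiplication, e.g.
maximal subgroups) are isomorphic as groups: there is a multiplicative
bijection from `S` onto `T`. -/
def GroupIsoOn {N : Type*} [Monoid N] (S : Set M) (T : Set N) : Prop :=
  ∃ φ : M → N, Set.BijOn φ S T ∧ ∀ x ∈ S, ∀ y ∈ S, φ (x * y) = φ x * φ y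

end Green

/-- `m` belongs to `J_F(X)`, the minimum `J`-class of the syntactic monoid of
`X*` meeting the image of `F` under the syntactic homomorphism `η`. -/
def InFMinJ {M : Type*} [Monoid M] (η : List A → M) (F : Set (List A)) (m : M) : Prop :=
  (∃ w ∈ F, JEquiv m (η w)) ∧ ∀ w ∈ F, JLe m (η w)

/-- A group code: a prefix code `Z` defined by a transitive permutation
representation of `A*` on a finite set, `Z*` being the stabilizer of a point. -/
def IsGroupCode (Z : Set (List A)) : Prop :=
  IsPrefixCode Z ∧
  ∃ (Q : Type) (_ : Fintype Q) (q₀ : Q) (α : List A → Equiv.Perm Q),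
    α [] = 1 ∧ (∀ u v : List A, α (u ++ v) = α u * α v) ∧
    (∀ q q' : Q, ∃ w : List A, α w q = q') ∧
    (∀ w : List A, InStar Z w ↔ α w q₀ = q₀) ∧
    Z = {w : List A | α w q₀ = q₀ ∧ w ≠ [] ∧
          ¬ ∃ u v : List A, u ≠ [] ∧ v ≠ [] ∧ α u q₀ = q₀ ∧ α v q₀ = q₀ ∧ w = u ++ v}

/-- Vertices of the extension graph of `w` in `F`: the disjoint union of
`L(w)` and `R(w)`. -/
def ExtVertex (F : Set (List A)) (w : List A) : Sum A A → Prop :=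
  fun x => Sum.elim (fun a => a :: w ∈ F) (fun b => w ++ [b] ∈ F) x

/-- The edge relation of the extension graph of `w` in `F`. -/
def ExtRel (F : Set (List A)) (w : List A) : Sum A A → Sum A A → Prop :=
  fun x y =>
    match x, y with
    | Sum.inl a, Sum.inr b => a :: (w ++ [b]) ∈ F
    | _, _ => False

/-- The extension graph `G(w)` of `w` in `F`. -/
def extGraph (F : Set (List A)) (w : List A) :
    SimpleGraph {x : Sum A A // ExtVertex F w x} :=
  SimpleGraph.fromRel fun x y => ExtRel F w x.1 y.1

/-- `F` is connected: every extension graph of a word of `F` is connected. -/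
def ConnectedSet (F : Set (List A)) : Prop :=
  ∀ w ∈ F, (extGraph F w).Connected

/-- `F` is a tree set: every extension graph of a word of `F` is a tree. -/
def TreeSet (F : Set (List A)) : Prop :=
  ∀ w ∈ F, (extGraph F w).IsTree

/-- The alphabet of `F` is the whole of `A`. -/
def AlphabetIs (F : Set (List A)) : Prop := ∀ a : A, [a] ∈ F

/-- The left quotient `u⁻¹L`, i.e. the state reached from the initial state of
the minimal automaton of `L` by reading `u`. -/
def leftQuot (L : Set (List A)) (u : List A) : Set (List A) := {w | u ++ w ∈ L}

/-- The set of states of the minimal automaton of `L`: the nonempty left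
quotients of `L`. -/
def MinStates (L : Set (List A)) : Set (Set (List A)) :=
  {q | q.Nonempty ∧ ∃ u : List A, q = leftQuot L u}

/-- The (partial) transition of the minimal automaton: `q · v`; it is defined
when the resulting set is nonempty. -/
def stepW (q : Set (List A)) (v : List A) : Set (List A) := {w | v ++ w ∈ q}

/-- The rank of the word `v` in the minimal automaton of `L`: the number of
distinct states `q · v` with `q` a state such that `q · v` is defined. -/
noncomputable def wordRank (L : Set (List A)) (v : List A) : ℕ :=
  ((fun q => stepW q v) '' {q ∈ MinStates L | (stepW q v).Nonempty}).ncard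

/-- The set of first return words of `F` to `u`. -/
def ReturnWords (F : Set (List A)) (u : List A) : Set (List A) :=
  {v | v ≠ [] ∧ u ++ v ∈ F ∧ u <:+ u ++ v ∧
    ¬ ∃ x y : List A, x ≠ [] ∧ y ≠ [] ∧ u ++ v = x ++ u ++ y}

/-- A code: every word has at most one factorization into elements of `X`. -/
def IsCode (X : Set (List A)) : Prop :=
  ∀ l m : List (List A), (∀ u ∈ l, u ∈ X) → (∀ u ∈ m, u ∈ X) →
    l.flatten = m.flatten → l = m

/-- The set `I = Q_X · K` of images of states of the minimal automaton of `L`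
under (partial) transitions by words whose syntactic image lies in `K`. -/
def ImageSet (L : Set (List A)) {M : Type*} [Monoid M] (η : List A → M) (K : Set M) :
    Set (Set (List A)) :=
  {p | ∃ q ∈ MinStates L, ∃ v : List A, η v ∈ K ∧ (stepW q v).Nonempty ∧ p = stepW q v}

/-- A witness for "a finite monoid `M` together with a monoid homomorphism
`A* → M`". -/
structure FiniteMonoidHomWitness (A : Type*) where
  M : Type
  [fin : Fintype M]
  [mon : Monoid M]
  φ : List A → M
  map_nil : φ [] = 1
  map_append : ∀ u v : List A, φ (u ++ v) = φ u * φ v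

end PaperDefs

/-!
A word `u ∈ F` that is not an internal factor of `X` (for instance one with `δ_X(u) = d`) has
rank `δ_X(u)`: the live states `q · u` of the minimal automaton of `X*` correspond bijectively to
the parses `(v, x, w)` of `u` through `(v, x, w) ↦ (x w)⁻¹X*`. This rests on the unitarity of `X*`
on both sides and on the fact that, `d_F(X)` being finite, every word of `F` can be completed on
either side into `X*`. Every `u ∈ F` is a suffix of a word of `F` with `d` parses, so its rank is
at least `d`; and rank cannot increase along the `J`-order, which gives `η u ∈ J_F(X) → rank = d`.
Conversely, if `u` has rank `d` and `w ∈ F`, pick `W = w t u` and `W r W` in `F`. The word `r W`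
permutes the `d` states reached by `u`, so a power `(r W)^k` fixes them, whence
`η u = η (u (r W)^k) ∈ M η(w) M`.
-/

theorem Set.Finite.exists_iterate_eq_self_of_image_eq {α : Type*} {S : Set α} {g : α → α}
    (hS : S.Finite) (h : g '' S = S) : ∃ k, 0 < k ∧ ∀ q ∈ S, g^[k] q = q := by
  have hmaps : Set.MapsTo g S S := fun q hq => h ▸ Set.mem_image_of_mem g hq
  have hbij : Set.BijOn g S S := (hS.surjOn_iff_bijOn_of_mapsTo hmaps).1 h.symm.subset
  have : Finite S := hS.to_subtype
  let σ : Equiv.Perm S := hbij.equiv g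
  refine ⟨orderOf σ, orderOf_pos σ, fun q hq => ?_⟩
  have hσ : (σ ^ orderOf σ) ⟨q, hq⟩ = ⟨q, hq⟩ := by rw [pow_orderOf_eq_one]; rfl
  rw [Equiv.Perm.coe_pow] at hσ
  simpa [σ, Set.BijOn.equiv, Set.MapsTo.iterate_restrict] using congrArg Subtype.val hσ

namespace PaperDefs

variable {A : Type*} {X F : Set (List A)}

theorem nil_mem_star (X : Set (List A)) : [] ∈ star X := ⟨[], by simp, rfl⟩

theorem mem_star_of_mem {x : List A} (hx : x ∈ X) : x ∈ star X :=
  ⟨[x], by simpa using hx, by simp⟩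

theorem append_mem_star {a b : List A} (ha : a ∈ star X) (hb : b ∈ star X) :
    a ++ b ∈ star X := by
  obtain ⟨l, hl, rfl⟩ := ha
  obtain ⟨m, hm, rfl⟩ := hb
  exact ⟨l ++ m, fun u hu => (List.mem_append.1 hu).elim (hl u) (hm u), by simp⟩

theorem exists_prefix_mem_of_mem_star {w : List A} (hw : w ∈ star X) (hne : w ≠ []) :
    ∃ x ∈ X, x <+: w := by
  obtain ⟨_ | ⟨x, l⟩, hl, rfl⟩ := hw
  · simp at hne
  · exact ⟨x, hl x (by simp), by simp⟩

theorem exists_suffix_mem_of_mem_star {w : List A} (hw : w ∈ star X) (hne : w ≠ []) :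
    ∃ x ∈ X, x <:+ w := by
  obtain ⟨l, hl, rfl⟩ := hw
  rcases l.eq_nil_or_concat' with rfl | ⟨l, x, rfl⟩
  · simp at hne
  · exact ⟨x, hl x (by simp), by simp⟩

theorem IsPrefixCode.eq_of_prefix (hP : IsPrefixCode X) {x y w : List A} (hx : x ∈ X)
    (hy : y ∈ X) (hxw : x <+: w) (hyw : y <+: w) : x = y :=
  (List.prefix_or_prefix_of_prefix hxw hyw).elim (hP.2.2 x hx y hy)
    fun h => (hP.2.2 y hy x hx h).symm

theorem IsPrefixCode.mem_star_of_append_mem (hP : IsPrefixCode X) {p q : List A}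
    (hp : p ∈ star X) (hpq : p ++ q ∈ star X) : q ∈ star X := by
  obtain ⟨l, hl, rfl⟩ := hp
  induction l with
  | nil => simpa using hpq
  | cons x l ih =>
    have hx : x ∈ X := hl x (by simp)
    refine ih (fun u hu => hl u (List.mem_cons_of_mem x hu)) ?_
    obtain ⟨_ | ⟨y, m⟩, hm, hflat⟩ := hpq
    · simp only [List.flatten_nil, List.flatten_cons, List.append_assoc, List.nil_eq,
        List.append_eq_nil_iff] at hflat
      exact absurd hflat.1 (hP.2.1 x hx)
    · simp only [List.flatten_cons, List.append_assoc] at hflat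
      obtain rfl := hP.eq_of_prefix (hm y (by simp)) hx ⟨_, hflat⟩ ⟨_, rfl⟩
      exact ⟨m, fun u hu => hm u (List.mem_cons_of_mem y hu), List.append_cancel_left hflat⟩

theorem reverse_mem_star_preimage_reverse {w : List A} (hw : w ∈ star X) :
    w.reverse ∈ star (List.reverse ⁻¹' X) := by
  obtain ⟨l, hl, rfl⟩ := hw
  refine ⟨(l.map List.reverse).reverse, ?_, List.reverse_flatten.symm⟩
  simp only [List.mem_reverse, List.mem_map]
  rintro _ ⟨v, hv, rfl⟩
  simpa using hl v hv

theorem reverse_mem_star_preimage_reverse_iff {w : List A} :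
    w.reverse ∈ star (List.reverse ⁻¹' X) ↔ w ∈ star X := by
  refine ⟨fun h => ?_, reverse_mem_star_preimage_reverse⟩
  simpa [List.reverse_involutive.preimage X] using reverse_mem_star_preimage_reverse h

theorem IsPrefixCode.reverse (hP : IsPrefixCode X) : IsSuffixCode (List.reverse ⁻¹' X) := by
  obtain ⟨⟨x, hx⟩, hne, hpre⟩ := hP
  refine ⟨⟨x.reverse, by simpa⟩, fun w hw => by simpa using hne _ hw, fun u hu v hv huv => ?_⟩
  simpa using hpre _ hu _ hv (List.reverse_suffix.1 (by simpa using huv))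

theorem IsSuffixCode.reverse (hS : IsSuffixCode X) : IsPrefixCode (List.reverse ⁻¹' X) := by
  obtain ⟨⟨x, hx⟩, hne, hsuf⟩ := hS
  refine ⟨⟨x.reverse, by simpa⟩, fun w hw => by simpa using hne _ hw, fun u hu v hv huv => ?_⟩
  simpa using hsuf _ hu _ hv (List.reverse_prefix.1 (by simpa using huv))

theorem IsSuffixCode.mem_star_of_append_mem (hS : IsSuffixCode X) {p q : List A}
    (hq : q ∈ star X) (hpq : p ++ q ∈ star X) : p ∈ star X := by
  rw [← reverse_mem_star_preimage_reverse_iff]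
  refine hS.reverse.mem_star_of_append_mem (reverse_mem_star_preimage_reverse hq) ?_
  simpa using reverse_mem_star_preimage_reverse hpq

theorem finite_setOf_prefix (w : List A) (P : List A → Prop) : {v | v <+: w ∧ P v}.Finite :=
  w.inits.finite_toSet.subset fun _ hv => (List.mem_inits _ _).2 hv.1

theorem finite_setOf_suffix (w : List A) (P : List A → Prop) : {v | v <:+ w ∧ P v}.Finite :=
  w.tails.finite_toSet.subset fun _ hv => (List.mem_tails _ _).2 hv.1

theorem exists_mem_star_append_not_prefix (hne : ∀ x ∈ X, x ≠ []) (w : List A) :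
    ∃ x ∈ star X, ∃ v, w = x ++ v ∧ ¬∃ s ∈ X, s <+: v := by
  induction h : w.length using Nat.strong_induction_on generalizing w with
  | _ n ih =>
  by_cases hpre : ∃ s ∈ X, s <+: w
  · obtain ⟨s, hs, w', rfl⟩ := hpre
    have hlen : w'.length < n := by
      have := List.length_pos_iff.2 (hne s hs)
      simp only [List.length_append] at h
      omega
    obtain ⟨x, hx, v, rfl, hv⟩ := ih _ hlen w' rfl
    exact ⟨s ++ x, append_mem_star (mem_star_of_mem hs) hx, v, by simp, hv⟩
  · exact ⟨[], nil_mem_star X, w, rfl, hpre⟩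

theorem IsPrefixCode.eq_of_append_eq_append (hP : IsPrefixCode X) {x₁ v₁ x₂ v₂ : List A}
    (hx₁ : x₁ ∈ star X) (hx₂ : x₂ ∈ star X) (hv₁ : ¬∃ s ∈ X, s <+: v₁)
    (hv₂ : ¬∃ s ∈ X, s <+: v₂) (h : x₁ ++ v₁ = x₂ ++ v₂) : x₁ = x₂ := by
  wlog hle : x₁.length ≤ x₂.length generalizing x₁ v₁ x₂ v₂
  · exact (this hx₂ hx₁ hv₂ hv₁ h.symm (by omega)).symm
  obtain ⟨s, rfl⟩ := List.prefix_of_prefix_length_le ⟨v₁, h⟩ ⟨v₂, rfl⟩ hle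
  have hv : v₁ = s ++ v₂ := by simpa using h
  rcases eq_or_ne s [] with rfl | hs
  · simp
  · obtain ⟨b, hb, hbs⟩ := exists_prefix_mem_of_mem_star (hP.mem_star_of_append_mem hx₁ hx₂) hs
    exact absurd ⟨b, hb, hv ▸ hbs.trans (List.prefix_append s v₂)⟩ hv₁

theorem IsParse.fst_prefix {w : List A} {p : List A × List A × List A} (h : IsParse X w p) :
    p.1 <+: w :=
  ⟨p.2.1 ++ p.2.2, by rw [← h.1, List.append_assoc]⟩

theorem IsPrefixCode.parse_eq_of_fst_eq (hP : IsPrefixCode X) {w : List A}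
    {p₁ p₂ : List A × List A × List A} (h₁ : IsParse X w p₁) (h₂ : IsParse X w p₂)
    (h : p₁.1 = p₂.1) : p₁ = p₂ := by
  obtain ⟨v, x₁, u₁⟩ := p₁
  obtain ⟨_, x₂, u₂⟩ := p₂
  obtain rfl : v = _ := h
  have heq : x₁ ++ u₁ = x₂ ++ u₂ :=
    List.append_cancel_left (by simpa only [List.append_assoc] using h₁.1.trans h₂.1.symm)
  obtain rfl := hP.eq_of_append_eq_append h₁.2.2.1 h₂.2.2.1 h₁.2.2.2 h₂.2.2.2 heq
  rw [List.append_cancel_left heq]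

theorem IsPrefixCode.delta_eq_ncard (hP : IsPrefixCode X) (w : List A) :
    delta X w = {v | v <+: w ∧ ¬∃ s ∈ X, s <:+ v}.ncard := by
  have hinj : Set.InjOn Prod.fst {p | IsParse X w p} :=
    fun p₁ h₁ p₂ h₂ h => hP.parse_eq_of_fst_eq h₁ h₂ h
  rw [delta, ← hinj.ncard_image]
  congr 1
  ext v
  constructor
  · rintro ⟨p, hp, rfl⟩
    exact ⟨hp.fst_prefix, hp.2.1⟩
  · rintro ⟨⟨w', rfl⟩, hv⟩
    obtain ⟨x, hx, u, rfl, hu⟩ := exists_mem_star_append_not_prefix hP.2.1 w'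
    exact ⟨(v, x, u), ⟨by simp, hv, hx, hu⟩, rfl⟩

theorem IsParse.reverse {w : List A} {p : List A × List A × List A} (h : IsParse X w p) :
    IsParse (List.reverse ⁻¹' X) w.reverse (p.2.2.reverse, p.2.1.reverse, p.1.reverse) := by
  obtain ⟨h1, h2, h3, h4⟩ := h
  refine ⟨by simp [← h1], ?_, reverse_mem_star_preimage_reverse h3, ?_⟩
  · rintro ⟨s, hs, hsuf⟩
    exact h4 ⟨s.reverse, hs, by simpa using List.reverse_prefix.2 hsuf⟩
  · rintro ⟨s, hs, hpre⟩
    exact h2 ⟨s.reverse, hs, by simpa using List.reverse_suffix.2 hpre⟩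

theorem delta_reverse (X : Set (List A)) (w : List A) :
    delta (List.reverse ⁻¹' X) w.reverse = delta X w := by
  let ρ : List A × List A × List A → List A × List A × List A :=
    fun p => (p.2.2.reverse, p.2.1.reverse, p.1.reverse)
  have hρ : Function.Involutive ρ := fun p => by simp [ρ]
  have himage : {p | IsParse (List.reverse ⁻¹' X) w.reverse p} = ρ '' {p | IsParse X w p} := by
    ext p
    refine ⟨fun h => ⟨ρ p, ?_, hρ p⟩, fun ⟨q, hq, hqp⟩ => hqp ▸ hq.reverse⟩
    simpa [ρ, List.reverse_involutive.preimage X] using h.reverse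
  rw [delta, delta, himage, Set.ncard_image_of_injective _ hρ.injective]

theorem IsSuffixCode.delta_eq_ncard (hS : IsSuffixCode X) (w : List A) :
    delta X w = {v | v <:+ w ∧ ¬∃ s ∈ X, s <+: v}.ncard := by
  have himage : {v | v <+: w.reverse ∧ ¬∃ s ∈ List.reverse ⁻¹' X, s <:+ v} =
      List.reverse '' {v | v <:+ w ∧ ¬∃ s ∈ X, s <+: v} := by
    ext v
    constructor
    · rintro ⟨hv, hsuf⟩
      refine ⟨v.reverse, ⟨by simpa using List.reverse_suffix.2 hv, ?_⟩, by simp⟩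
      rintro ⟨s, hs, hpre⟩
      exact hsuf ⟨s.reverse, by simpa using hs, by simpa using List.reverse_suffix.2 hpre⟩
    · rintro ⟨v, ⟨hv, hpre⟩, rfl⟩
      refine ⟨List.reverse_prefix.2 hv, ?_⟩
      rintro ⟨s, hs, hsuf⟩
      exact hpre ⟨s.reverse, hs, by simpa using List.reverse_prefix.2 hsuf⟩
  rw [← delta_reverse, hS.reverse.delta_eq_ncard, himage,
    Set.ncard_image_of_injective _ List.reverse_injective]

theorem IsPrefixCode.delta_le_delta_append (hP : IsPrefixCode X) (u t : List A) :
    delta X u ≤ delta X (u ++ t) := by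
  rw [hP.delta_eq_ncard, hP.delta_eq_ncard]
  exact Set.ncard_le_ncard (fun v ⟨hv, h⟩ => ⟨hv.trans (List.prefix_append u t), h⟩)
    (finite_setOf_prefix _ _)

theorem delta_le_of_Fdeg_eq {d : ℕ} (hd : Fdeg X F = d) {w : List A} (hw : w ∈ F) :
    delta X w ≤ d := by
  have : (delta X w : ℕ∞) ≤ Fdeg X F := le_iSup₂ (f := fun w _ => (delta X w : ℕ∞)) w hw
  exact_mod_cast hd ▸ this

theorem exists_delta_eq_of_Fdeg_eq (hF : F.Nonempty) {d : ℕ} (hd : Fdeg X F = d) :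
    ∃ w ∈ F, delta X w = d := by
  have : Nonempty F := hF.to_subtype
  rw [Fdeg, iSup_subtype'] at hd
  obtain ⟨⟨w, hw⟩, hw'⟩ := ENat.exists_eq_iSup_of_lt_top (hd ▸ ENat.natCast_lt_top d)
  exact ⟨w, hw, by exact_mod_cast hw'.trans hd⟩

theorem Recurrent.reverse (hF : Recurrent F) : Recurrent (List.reverse ⁻¹' F) := by
  obtain ⟨hfac, ⟨w, hw⟩, hne, hrec⟩ := hF
  refine ⟨fun w hw u hu => hfac _ hw _ (List.reverse_infix.2 hu), ⟨w.reverse, by simpa⟩,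
    fun h => hne ?_, fun u hu v hv => ?_⟩
  · rw [← List.reverse_involutive.preimage F, h]
    ext
    simp
  · obtain ⟨m, hm⟩ := hrec _ hv _ hu
    exact ⟨m.reverse, by simpa using hm⟩

theorem Recurrent.exists_le_ncard_suffix_prefix (hF : Recurrent F) {v : List A} (hv : v ∈ F)
    (hne : v ≠ []) (k : ℕ) : ∃ w ∈ F, k ≤ {σ | σ <:+ w ∧ v <+: σ}.ncard := by
  induction k with
  | zero => exact ⟨v, hv, Nat.zero_le _⟩
  | succ k ih =>
    obtain ⟨w, hw, hk⟩ := ih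
    obtain ⟨r, hr⟩ := hF.2.2.2 w hw v hv
    refine ⟨w ++ r ++ v, hr, ?_⟩
    set T := {σ | σ <:+ w ∧ v <+: σ}
    have hsub : insert v ((· ++ (r ++ v)) '' T) ⊆ {σ | σ <:+ w ++ r ++ v ∧ v <+: σ} := by
      rintro _ (rfl | ⟨σ, ⟨⟨p, rfl⟩, hvσ⟩, rfl⟩)
      · exact ⟨List.suffix_append _ _, List.prefix_rfl⟩
      · exact ⟨⟨p, by simp⟩, hvσ.trans (List.prefix_append _ _)⟩
    have hnotin : v ∉ (· ++ (r ++ v)) '' T := by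
      rintro ⟨σ, ⟨-, hvσ⟩, h⟩
      have hlen := congrArg List.length h
      have := hvσ.length_le
      have := List.length_pos_iff.2 hne
      simp only [List.length_append] at hlen
      omega
    calc k + 1 ≤ (insert v ((· ++ (r ++ v)) '' T)).ncard := by
          rw [Set.ncard_insert_of_notMem hnotin ((finite_setOf_suffix _ _).image _),
            Set.ncard_image_of_injective _ (List.append_left_injective _)]
          omega
      _ ≤ _ := Set.ncard_le_ncard hsub (finite_setOf_suffix _ _)

theorem exists_mem_prefix_or_prefix_mem (hS : IsSuffixCode X) (hF : Recurrent F) {d : ℕ}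
    (hdle : ∀ w ∈ F, delta X w ≤ d) {v : List A} (hv : v ∈ F) :
    (∃ x ∈ X, x <+: v) ∨ ∃ x ∈ X, v <+: x := by
  rcases eq_or_ne v [] with rfl | hne
  · obtain ⟨x, hx⟩ := hS.1
    exact Or.inr ⟨x, hx, List.nil_prefix⟩
  -- otherwise the `d + 1` suffixes beginning with `v` of a word of `F` would yield `d + 1` parses
  by_contra! h
  obtain ⟨w, hw, hk⟩ := hF.exists_le_ncard_suffix_prefix hv hne (d + 1)
  have hsub : {σ | σ <:+ w ∧ v <+: σ} ⊆ {σ | σ <:+ w ∧ ¬∃ s ∈ X, s <+: σ} := by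
    rintro σ ⟨hσw, hvσ⟩
    refine ⟨hσw, fun ⟨s, hs, hsσ⟩ => ?_⟩
    rcases List.prefix_or_prefix_of_prefix hsσ hvσ with h' | h'
    exacts [h.1 s hs h', h.2 s hs h']
  have := (Set.ncard_le_ncard hsub (finite_setOf_suffix _ _)).trans_eq (hS.delta_eq_ncard w).symm
  have := hdle w hw
  omega

theorem exists_append_mem_star (hP : IsPrefixCode X) (hS : IsSuffixCode X) (hF : Recurrent F)
    {d : ℕ} (hdle : ∀ w ∈ F, delta X w ≤ d) {v : List A} (hv : v ∈ F) :
    ∃ z, v ++ z ∈ star X := by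
  induction h : v.length using Nat.strong_induction_on generalizing v with
  | _ n ih =>
  rcases exists_mem_prefix_or_prefix_mem hS hF hdle hv with ⟨x, hx, v', rfl⟩ | ⟨x, hx, z, rfl⟩
  · have hlen : v'.length < n := by
      have := List.length_pos_iff.2 (hP.2.1 x hx)
      simp only [List.length_append] at h
      omega
    obtain ⟨z, hz⟩ := ih _ hlen (hF.1 _ hv v' (List.suffix_append x v').isInfix) rfl
    exact ⟨z, by rw [List.append_assoc]; exact append_mem_star (mem_star_of_mem hx) hz⟩
  · exact ⟨z, mem_star_of_mem hx⟩

theorem exists_append_mem_star_left (hP : IsPrefixCode X) (hS : IsSuffixCode X)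
    (hF : Recurrent F) {d : ℕ} (hdle : ∀ w ∈ F, delta X w ≤ d) {v : List A} (hv : v ∈ F) :
    ∃ z, z ++ v ∈ star X := by
  have hdle' : ∀ w ∈ List.reverse ⁻¹' F, delta (List.reverse ⁻¹' X) w ≤ d := fun w hw => by
    rw [← w.reverse_reverse, delta_reverse]
    exact hdle _ hw
  obtain ⟨z, hz⟩ := exists_append_mem_star hS.reverse hP.reverse hF.reverse hdle'
    (v := v.reverse) (by simpa using hv)
  exact ⟨z.reverse, reverse_mem_star_preimage_reverse_iff.1 (by simpa using hz)⟩

theorem stepW_leftQuot (L : Set (List A)) (y v : List A) :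
    stepW (leftQuot L y) v = leftQuot L (y ++ v) := by
  ext
  simp [stepW, leftQuot]

theorem stepW_append (q : Set (List A)) (a b : List A) :
    stepW q (a ++ b) = stepW (stepW q a) b := by
  ext
  simp [stepW]

theorem stepW_empty (v : List A) : stepW (∅ : Set (List A)) v = ∅ := by
  ext
  simp [stepW]

theorem stepW_flatten_replicate (q : Set (List A)) (c : List A) (k : ℕ) :
    stepW q (List.replicate k c).flatten = (stepW · c)^[k] q := by
  induction k generalizing q with
  | zero =>
    ext
    simp [stepW]
  | succ k ih =>
    rw [List.replicate_succ, List.flatten_cons, stepW_append, ih, Function.iterate_succ_apply]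

theorem IsPrefixCode.leftQuot_star_append (hP : IsPrefixCode X) {a : List A} (ha : a ∈ star X)
    (w : List A) : leftQuot (star X) (a ++ w) = leftQuot (star X) w := by
  ext t
  simp only [leftQuot, Set.mem_ofPred_eq, List.append_assoc]
  exact ⟨hP.mem_star_of_append_mem ha, append_mem_star ha⟩

/-- The defined states `q · v`, `q` ranging over the states `y⁻¹L` of the minimal automaton. -/
def stateImage (L : Set (List A)) (v : List A) : Set (Set (List A)) :=
  {p | p.Nonempty ∧ ∃ y, p = leftQuot L (y ++ v)}

theorem wordRank_eq_ncard_stateImage (L : Set (List A)) (v : List A) :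
    wordRank L v = (stateImage L v).ncard := by
  unfold wordRank
  congr 1
  ext p
  constructor
  · rintro ⟨q, ⟨⟨-, y, rfl⟩, hne⟩, rfl⟩
    exact ⟨hne, y, stepW_leftQuot L y v⟩
  · rintro ⟨hne, y, rfl⟩
    have h := stepW_leftQuot L y v
    refine ⟨leftQuot L y, ⟨⟨?_, y, rfl⟩, h ▸ hne⟩, h⟩
    obtain ⟨z, hz⟩ := hne
    exact ⟨v ++ z, by simpa [leftQuot] using hz⟩

theorem stateImage_append_subset (L : Set (List A)) (p v : List A) :
    stateImage L (p ++ v) ⊆ stateImage L v := by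
  rintro q ⟨hne, y, rfl⟩
  exact ⟨hne, y ++ p, by rw [List.append_assoc]⟩

theorem stateImage_append_subset_image (L : Set (List A)) (w c : List A) :
    stateImage L (w ++ c) ⊆ (stepW · c) '' stateImage L w := by
  rintro _ ⟨hne, y, rfl⟩
  have h : stepW (leftQuot L (y ++ w)) c = leftQuot L (y ++ (w ++ c)) := by
    rw [stepW_leftQuot, List.append_assoc]
  refine ⟨leftQuot L (y ++ w), ⟨?_, y, rfl⟩, h⟩
  obtain ⟨z, hz⟩ := hne
  exact ⟨c ++ z, by simpa [leftQuot] using hz⟩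

theorem finite_stateImage {L : Set (List A)} (hfin : (Set.range (leftQuot L)).Finite)
    (v : List A) : (stateImage L v).Finite :=
  hfin.subset fun _ ⟨_, y, hy⟩ => ⟨y ++ v, hy.symm⟩

theorem wordRank_append_le {L : Set (List A)} (hfin : (Set.range (leftQuot L)).Finite)
    (w c : List A) : wordRank L (w ++ c) ≤ wordRank L w := by
  rw [wordRank_eq_ncard_stateImage, wordRank_eq_ncard_stateImage]
  exact (Set.ncard_le_ncard (stateImage_append_subset_image L w c)
    ((finite_stateImage hfin w).image _)).trans (Set.ncard_image_le (finite_stateImage hfin w))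

theorem wordRank_append_le_left {L : Set (List A)} (hfin : (Set.range (leftQuot L)).Finite)
    (p w : List A) : wordRank L (p ++ w) ≤ wordRank L w := by
  rw [wordRank_eq_ncard_stateImage, wordRank_eq_ncard_stateImage]
  exact Set.ncard_le_ncard (stateImage_append_subset L p w) (finite_stateImage hfin w)

def IsInternalFactor (X : Set (List A)) (u : List A) : Prop :=
  ∃ x ∈ X, ∃ s t, s ≠ [] ∧ t ≠ [] ∧ x = s ++ u ++ t

theorem not_isInternalFactor_of_delta_eq (hP : IsPrefixCode X) (hS : IsSuffixCode X)
    (hF : Factorial F) (hXF : X ⊆ F) {d : ℕ} (hdle : ∀ w ∈ F, delta X w ≤ d) {u : List A}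
    (hδ : delta X u = d) : ¬IsInternalFactor X u := by
  rintro ⟨x, hx, s, t, hs, ht, hst⟩
  have hsuF : s ++ u ∈ F := hF x (hXF hx) _ ⟨[], t, by simp [hst]⟩
  have heq : {v | v <:+ u ∧ ¬∃ p ∈ X, p <+: v} = {v | v <:+ s ++ u ∧ ¬∃ p ∈ X, p <+: v} :=
    Set.eq_of_subset_of_ncard_le (fun v ⟨hv, h⟩ => ⟨hv.trans (List.suffix_append s u), h⟩)
      (by rw [← hS.delta_eq_ncard, ← hS.delta_eq_ncard, hδ]; exact hdle _ hsuF)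
      (finite_setOf_suffix _ _)
  obtain ⟨p, hp, hpsu⟩ : ∃ p ∈ X, p <+: s ++ u := by
    by_contra hno
    have hmem : s ++ u ∈ {v | v <:+ s ++ u ∧ ¬∃ p ∈ X, p <+: v} := ⟨List.suffix_rfl, hno⟩
    rw [← heq] at hmem
    have hlen := hmem.1.length_le
    have := List.length_pos_iff.2 hs
    simp only [List.length_append] at hlen
    omega
  obtain rfl := hP.eq_of_prefix hp hx (hpsu.trans ⟨t, hst.symm⟩) List.prefix_rfl
  have hlen := congrArg List.length hst
  have hle := hpsu.length_le
  have := List.length_pos_iff.2 ht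
  simp only [List.length_append] at hlen hle
  omega

theorem exists_prefix_append_mem_star {u : List A} (hu : ¬IsInternalFactor X u) {y z : List A}
    (h : y ++ u ++ z ∈ star X) : ∃ v, v <+: u ∧ y ++ v ∈ star X := by
  obtain ⟨l, hl, hflat⟩ := h
  induction l generalizing y with
  | nil =>
    obtain rfl : y = [] := by simp_all
    exact ⟨[], List.nil_prefix, nil_mem_star X⟩
  | cons b l ih =>
    rcases eq_or_ne y [] with rfl | hy
    · exact ⟨[], List.nil_prefix, nil_mem_star X⟩
    have hb : b ∈ X := hl b (by simp)
    rw [List.flatten_cons] at hflat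
    rcases le_or_gt b.length y.length with hby | hyb
    · obtain ⟨y', rfl⟩ : b <+: y :=
        List.prefix_of_prefix_length_le ⟨_, hflat⟩ ⟨u ++ z, by simp⟩ hby
      obtain ⟨v, hvu, hv⟩ :=
        ih (fun x hx => hl x (List.mem_cons_of_mem b hx)) (by simpa using hflat)
      exact ⟨v, hvu, by simpa using append_mem_star (mem_star_of_mem hb) hv⟩
    obtain ⟨v, rfl⟩ : y <+: b :=
      List.prefix_of_prefix_length_le ⟨u ++ z, by simp⟩ ⟨_, hflat⟩ hyb.le
    have hvuz : v ++ l.flatten = u ++ z := by simpa using hflat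
    rcases le_or_gt v.length u.length with hvu | huv
    · exact ⟨v, List.prefix_of_prefix_length_le ⟨_, hvuz⟩ ⟨z, rfl⟩ hvu, mem_star_of_mem hb⟩
    obtain ⟨t, rfl⟩ : u <+: v := List.prefix_of_prefix_length_le ⟨z, rfl⟩ ⟨_, hvuz⟩ huv.le
    refine absurd ⟨_, hb, y, t, hy, ?_, by simp⟩ hu
    rintro rfl
    simp at huv

theorem exists_isParse_leftQuot_eq (hP : IsPrefixCode X) (hS : IsSuffixCode X) {u : List A}
    (hu : ¬IsInternalFactor X u) {y : List A} (hlive : (leftQuot (star X) (y ++ u)).Nonempty) :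
    ∃ p, IsParse X u p ∧ leftQuot (star X) (y ++ u) = leftQuot (star X) (p.2.1 ++ p.2.2) := by
  classical
  obtain ⟨z, hz⟩ := hlive
  have hex : ∃ n, ∃ v, v.length = n ∧ v <+: u ∧ y ++ v ∈ star X :=
    have ⟨v, hv⟩ := exists_prefix_append_mem_star hu (z := z) (by simpa [leftQuot] using hz)
    ⟨_, v, rfl, hv⟩
  obtain ⟨v, hvlen, ⟨w, rfl⟩, hyv⟩ := Nat.find_spec hex
  -- a shortest `v` with `y v ∈ X*` has no suffix in `X`, by left unitarity of `X*`
  have hv : ¬∃ s ∈ X, s <:+ v := by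
    rintro ⟨s, hs, v', rfl⟩
    have hyv' : y ++ v' ∈ star X :=
      hS.mem_star_of_append_mem (mem_star_of_mem hs) (by simpa using hyv)
    have := Nat.find_min' hex ⟨v', rfl, (List.prefix_append v' s).trans (List.prefix_append _ w),
      hyv'⟩
    have := List.length_pos_iff.2 (hP.2.1 s hs)
    simp only [List.length_append] at hvlen
    omega
  obtain ⟨x, hx, u', rfl, hu'⟩ := exists_mem_star_append_not_prefix hP.2.1 w
  refine ⟨(v, x, u'), ⟨List.append_assoc _ _ _, hv, hx, hu'⟩, ?_⟩
  rw [← List.append_assoc, hP.leftQuot_star_append hyv]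

theorem IsParse.leftQuot_mem_stateImage (hP : IsPrefixCode X) (hS : IsSuffixCode X)
    (hF : Recurrent F) {d : ℕ} (hdle : ∀ w ∈ F, delta X w ≤ d) {u : List A} (hu : u ∈ F)
    {p : List A × List A × List A} (hp : IsParse X u p) :
    leftQuot (star X) (p.2.1 ++ p.2.2) ∈ stateImage (star X) u := by
  obtain ⟨v, x, u'⟩ := p
  obtain ⟨rfl, -, hx, -⟩ := hp
  obtain ⟨z, hz⟩ := exists_append_mem_star hP hS hF hdle (v := u')
    (hF.1 _ hu _ ⟨v ++ x, [], by simp⟩)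
  obtain ⟨z₀, hz₀⟩ := exists_append_mem_star_left hP hS hF hdle (v := v)
    (hF.1 _ hu _ ⟨[], x ++ u', by simp⟩)
  refine ⟨⟨z, by simpa [leftQuot] using append_mem_star hx hz⟩, z₀, ?_⟩
  rw [← hP.leftQuot_star_append hz₀]
  simp

theorem IsParse.fst_eq_of_prefix (hP : IsPrefixCode X) (hS : IsSuffixCode X) (hF : Recurrent F)
    {d : ℕ} (hdle : ∀ w ∈ F, delta X w ≤ d) {u : List A} (hu : u ∈ F)
    {p₁ p₂ : List A × List A × List A} (h₁ : IsParse X u p₁) (h₂ : IsParse X u p₂)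
    (hpre : p₁.1 <+: p₂.1)
    (heq : leftQuot (star X) (p₁.2.1 ++ p₁.2.2) = leftQuot (star X) (p₂.2.1 ++ p₂.2.2)) :
    p₁.1 = p₂.1 := by
  obtain ⟨v, x₁, u₁⟩ := p₁
  obtain ⟨_, x₂, u₂⟩ := p₂
  obtain ⟨s, rfl⟩ := hpre
  have hcancel : x₁ ++ u₁ = s ++ (x₂ ++ u₂) :=
    List.append_cancel_left (as := v) (by simpa using h₁.1.trans h₂.1.symm)
  obtain ⟨z, hz⟩ := exists_append_mem_star hP hS hF hdle (v := u₂)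
    (hF.1 _ hu _ ⟨v ++ s ++ x₂, [], by simpa using h₂.1⟩)
  have hz₂ : x₂ ++ u₂ ++ z ∈ star X := by simpa using append_mem_star h₂.2.2.1 hz
  have hz₁ : x₁ ++ u₁ ++ z ∈ star X := (Set.ext_iff.1 heq z).2 hz₂
  have hs : s ∈ star X := hS.mem_star_of_append_mem hz₂ (by simpa [hcancel] using hz₁)
  by_contra hne
  obtain ⟨b, hb, hbs⟩ := exists_suffix_mem_of_mem_star hs (by rintro rfl; simp at hne)
  exact h₂.2.1 ⟨b, hb, hbs.trans (List.suffix_append v s)⟩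

theorem wordRank_eq_delta (hP : IsPrefixCode X) (hS : IsSuffixCode X) (hF : Recurrent F)
    {d : ℕ} (hdle : ∀ w ∈ F, delta X w ≤ d) {u : List A} (hu : u ∈ F)
    (hint : ¬IsInternalFactor X u) : wordRank (star X) u = delta X u := by
  have hinj : Set.InjOn (fun p : List A × List A × List A => leftQuot (star X) (p.2.1 ++ p.2.2))
      {p | IsParse X u p} := fun p₁ h₁ p₂ h₂ heq =>
    hP.parse_eq_of_fst_eq h₁ h₂ <|
      (List.prefix_or_prefix_of_prefix h₁.fst_prefix h₂.fst_prefix).elim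
        (fun h => h₁.fst_eq_of_prefix hP hS hF hdle hu h₂ h heq)
        (fun h => (h₂.fst_eq_of_prefix hP hS hF hdle hu h₁ h heq.symm).symm)
  rw [wordRank_eq_ncard_stateImage, delta, ← hinj.ncard_image]
  congr 1
  ext q
  constructor
  · rintro ⟨hne, y, rfl⟩
    obtain ⟨p, hp, hq⟩ := exists_isParse_leftQuot_eq hP hS hint hne
    exact ⟨p, hp, hq.symm⟩
  · rintro ⟨p, hp, rfl⟩
    exact hp.leftQuot_mem_stateImage hP hS hF hdle hu

theorem wordRank_eq_of_delta_eq (hP : IsPrefixCode X) (hS : IsSuffixCode X) (hF : Recurrent F)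
    (hXF : X ⊆ F) {d : ℕ} (hdle : ∀ w ∈ F, delta X w ≤ d) {u : List A} (hu : u ∈ F)
    (hδ : delta X u = d) : wordRank (star X) u = d :=
  hδ ▸ wordRank_eq_delta hP hS hF hdle hu
    (not_isInternalFactor_of_delta_eq hP hS hF.1 hXF hdle hδ)

theorem le_wordRank (hP : IsPrefixCode X) (hS : IsSuffixCode X) (hF : Recurrent F)
    (hXF : X ⊆ F) {d : ℕ} (hdle : ∀ w ∈ F, delta X w ≤ d) {w₀ : List A} (hw₀ : w₀ ∈ F)
    (hδw₀ : delta X w₀ = d) (hfin : (Set.range (leftQuot (star X))).Finite) {u : List A}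
    (hu : u ∈ F) : d ≤ wordRank (star X) u := by
  obtain ⟨r, hr⟩ := hF.2.2.2 w₀ hw₀ u hu
  have hδ : delta X (w₀ ++ r ++ u) = d :=
    le_antisymm (hdle _ hr) (hδw₀ ▸ by simpa using hP.delta_le_delta_append w₀ (r ++ u))
  calc d = wordRank (star X) (w₀ ++ r ++ u) :=
        (wordRank_eq_of_delta_eq hP hS hF hXF hdle hr hδ).symm
    _ ≤ wordRank (star X) u := wordRank_append_le_left hfin _ u

section Syntactic

variable {L : Set (List A)} {M : Type*} [Monoid M] {η : List A → M}

theorem IsSyntacticHom.leftQuot_append_eq (hη : IsSyntacticHom L η) {a b : List A}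
    (h : η a = η b) (x : List A) : leftQuot L (x ++ a) = leftQuot L (x ++ b) :=
  Set.ext fun w => (hη.syn a b).1 h x w

theorem IsSyntacticHom.finite_range_leftQuot [Finite M] (hη : IsSyntacticHom L η) :
    (Set.range (leftQuot L)).Finite := by
  refine (Set.finite_range fun m => leftQuot L (Function.surjInv hη.surj m)).subset ?_
  rintro _ ⟨y, rfl⟩
  exact ⟨η y, by simpa using hη.leftQuot_append_eq (Function.surjInv_eq hη.surj (η y)) []⟩

theorem IsSyntacticHom.wordRank_eq (hη : IsSyntacticHom L η) {a b : List A} (h : η a = η b) :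
    wordRank L a = wordRank L b := by
  simp only [wordRank_eq_ncard_stateImage, stateImage, hη.leftQuot_append_eq h]

theorem IsSyntacticHom.wordRank_le_of_jLe [Finite M] (hη : IsSyntacticHom L η) {u w : List A}
    (h : JLe (η u) (η w)) : wordRank L u ≤ wordRank L w := by
  obtain ⟨x, y, hxy⟩ := h
  obtain ⟨p, rfl⟩ := hη.surj x
  obtain ⟨q, rfl⟩ := hη.surj y
  rw [← hη.map_append, ← hη.map_append] at hxy
  rw [hη.wordRank_eq hxy]
  exact (wordRank_append_le hη.finite_range_leftQuot _ q).trans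
    (wordRank_append_le_left hη.finite_range_leftQuot p w)

theorem IsSyntacticHom.map_append_eq_of_stepW_eq (hη : IsSyntacticHom L η) {u e : List A}
    (h : ∀ q ∈ stateImage L u, stepW q e = q) : η (u ++ e) = η u := by
  refine (hη.syn _ _).2 fun x z => ?_
  have hx : leftQuot L (x ++ (u ++ e)) = leftQuot L (x ++ u) := by
    rw [← List.append_assoc, ← stepW_leftQuot]
    rcases (leftQuot L (x ++ u)).eq_empty_or_nonempty with hempty | hne
    · rw [hempty, stepW_empty]
    · exact h _ ⟨hne, x, rfl⟩
  exact Set.ext_iff.1 hx z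

end Syntactic

/-- With `W = p u`, the word `W r W` reaches the same `d` states as `u` (its rank is at least
`d`), so `r W` maps these states onto themselves. -/
theorem image_stepW_stateImage_eq (hP : IsPrefixCode X) (hS : IsSuffixCode X)
    (hF : Recurrent F) (hXF : X ⊆ F) {d : ℕ} (hdle : ∀ w ∈ F, delta X w ≤ d) {w₀ : List A}
    (hw₀ : w₀ ∈ F) (hδw₀ : delta X w₀ = d) (hfin : (Set.range (leftQuot (star X))).Finite)
    {u p r : List A} (hrank : wordRank (star X) u = d) (hr : p ++ u ++ r ++ (p ++ u) ∈ F) :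
    (stepW · (r ++ (p ++ u))) '' stateImage (star X) u = stateImage (star X) u := by
  set S := stateImage (star X) u
  set W := p ++ u
  have hSfin : S.Finite := finite_stateImage hfin u
  have hWS : stateImage (star X) W ⊆ S := stateImage_append_subset _ p u
  have hV : stateImage (star X) (W ++ r ++ W) = S := by
    refine Set.eq_of_subset_of_ncard_le ?_ ?_ hSfin
    · simpa [W] using stateImage_append_subset (star X) (p ++ u ++ r ++ p) u
    · rw [← wordRank_eq_ncard_stateImage, ← wordRank_eq_ncard_stateImage, hrank]
      exact le_wordRank hP hS hF hXF hdle hw₀ hδw₀ hfin hr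
  refine (Set.eq_of_subset_of_ncard_le ?_ (Set.ncard_image_le hSfin) (hSfin.image _)).symm
  calc S = stateImage (star X) (W ++ (r ++ W)) := by rw [← List.append_assoc, hV]
    _ ⊆ (stepW · (r ++ W)) '' stateImage (star X) W := stateImage_append_subset_image _ _ _
    _ ⊆ (stepW · (r ++ W)) '' S := Set.image_mono hWS

theorem jLe_of_wordRank_eq (hP : IsPrefixCode X) (hS : IsSuffixCode X) (hF : Recurrent F)
    (hXF : X ⊆ F) {d : ℕ} (hdle : ∀ w ∈ F, delta X w ≤ d) {w₀ : List A} (hw₀ : w₀ ∈ F)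
    (hδw₀ : delta X w₀ = d) {M : Type*} [Monoid M] [Finite M] {η : List A → M}
    (hη : IsSyntacticHom (star X) η) {u : List A} (hu : u ∈ F) (hrank : wordRank (star X) u = d)
    {w : List A} (hw : w ∈ F) : JLe (η u) (η w) := by
  have hfin := hη.finite_range_leftQuot
  obtain ⟨t, ht⟩ := hF.2.2.2 w hw u hu
  obtain ⟨r, hr⟩ := hF.2.2.2 _ ht _ ht
  set c := r ++ (w ++ t ++ u)
  obtain ⟨k, hk, hfix⟩ := (finite_stateImage hfin u).exists_iterate_eq_self_of_image_eq
    (image_stepW_stateImage_eq hP hS hF hXF hdle hw₀ hδw₀ hfin (p := w ++ t) hrank hr)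
  have hcycle : η (u ++ (List.replicate k c).flatten) = η u :=
    hη.map_append_eq_of_stepW_eq fun q hq => by rw [stepW_flatten_replicate, hfix q hq]
  obtain ⟨k, rfl⟩ := Nat.exists_eq_add_of_lt hk
  refine ⟨η (u ++ r), η (t ++ u ++ (List.replicate k c).flatten), ?_⟩
  rw [← hcycle, ← hη.map_append, ← hη.map_append]
  simp [c, List.replicate_succ]

end PaperDefs

open PaperDefs in
theorem stmt_13_general {A : Type}
    (F X : Set (List A)) (hF : Recurrent F)
    (hX : IsFMaximalBifixCode F X)
    {MX : Type} [Monoid MX] [Finite MX] {ηX : List A → MX}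
    (hηX : IsSyntacticHom (star X) ηX)
    (u : List A) (hu : u ∈ F) (d : ℕ) (hd : Fdeg X F = (d : ℕ∞)) :
    (wordRank (star X) u = d ↔ InFMinJ ηX F (ηX u)) ∧
    (delta X u = d → wordRank (star X) u = d) := by
  obtain ⟨⟨hP, hS⟩, hXF, -⟩ := hX
  have hdle : ∀ w ∈ F, delta X w ≤ d := fun _ => delta_le_of_Fdeg_eq hd
  obtain ⟨w₀, hw₀, hδw₀⟩ := exists_delta_eq_of_Fdeg_eq hF.2.1 hd
  have hmax : ∀ {w}, w ∈ F → delta X w = d → wordRank (star X) w = d :=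
    wordRank_eq_of_delta_eq hP hS hF hXF hdle
  refine ⟨⟨fun hrank => ?_, fun hJ => ?_⟩, hmax hu⟩
  · exact ⟨⟨u, hu, ⟨1, 1, by simp⟩, ⟨1, 1, by simp⟩⟩,
      fun w hw => jLe_of_wordRank_eq hP hS hF hXF hdle hw₀ hδw₀ hηX hu hrank hw⟩
  · refine le_antisymm ?_ (le_wordRank hP hS hF hXF hdle hw₀ hδw₀ hηX.finite_range_leftQuot hu)
    calc wordRank (star X) u ≤ wordRank (star X) w₀ := hηX.wordRank_le_of_jLe (hJ.2 w₀ hw₀)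
      _ = d := hmax hw₀ hδw₀

open PaperDefs in
theorem stmt_13 {A : Type} [Fintype A]
    (F X : Set (List A)) (hF : Recurrent F)
    (hX : IsFMaximalBifixCode F X) (hrat : IsRational X)
    {MX : Type} [Monoid MX] [Finite MX] {ηX : List A → MX}
    (hηX : IsSyntacticHom (star X) ηX)
    (u : List A) (hu : u ∈ F) (d : ℕ) (hd : Fdeg X F = (d : ℕ∞)) :
    (wordRank (star X) u = d ↔ InFMinJ ηX F (ηX u)) ∧
    (delta X u = d → wordRank (star X) u = d) :=
  stmt_13_general F X hF hX hηX u hu d hd
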